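/- Let Γ be a full-rank lattice, ν > 0, χ a unimodular pseudo-character, and define P_m(z) = Σ_{γ∈Γ} χ(γ)(z−γ)^m e^{−(ν/2)|γ|² + ν z γ̄} and a_{m,n} = Σ_{γ∈Γ} χ(γ) e^{−(ν/2)|γ|²} H^ν_{m,n}(γ, γ̄). Then P_m(z) = ((−1)^m / ν^m) Σ_{n=0}^∞ a_{m,n} z^n / n!, with absolute convergence. -/

import Mathlib

open Complex

/-- The weighted complex Hermite polynomial `H^ν_{m,n}(ξ, ξ̄)`. -/
noncomputable def hermiteC (ν : ℝ) (m n : ℕ) (ξ : ℂ) : ℂ :=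
  (m.factorial : ℂ) * (n.factorial : ℂ) * (ν : ℂ) ^ (m + n) *
    ∑ k ∈ Finset.range (min m n + 1),
      (-1 : ℂ) ^ k * ξ ^ (m - k) * (starRingEnd ℂ ξ) ^ (n - k) /
        ((ν : ℂ) ^ k * (k.factorial : ℂ) * ((m - k).factorial : ℂ) * ((n - k).factorial : ℂ))

/-- The lattice point `m ω₁ + n ω₂` of the lattice `Γ = ℤω₁ + ℤω₂`. -/
noncomputable def latPt (ω₁ ω₂ : ℂ) (p : ℤ × ℤ) : ℂ := (p.1 : ℂ) * ω₁ + (p.2 : ℂ) * ω₂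

/-- The complex Hermite-Taylor coefficient `a_{m,n} = Σ_{γ∈Γ} χ(γ) e^{−(ν/2)|γ|²} H^ν_{m,n}(γ, γ̄)`. -/
noncomputable def aCoeff (ν : ℝ) (ω₁ ω₂ : ℂ) (χ : ℂ → ℂ) (m n : ℕ) : ℂ :=
  ∑' γ : ℤ × ℤ,
    χ (latPt ω₁ ω₂ γ) * Complex.exp (-(ν : ℂ) / 2 * (‖latPt ω₁ ω₂ γ‖ : ℂ) ^ 2) *
      hermiteC ν m n (latPt ω₁ ω₂ γ)

/-- The Poincaré series of the monomial `e_m`: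
`P_m(z) = Σ_{γ∈Γ} χ(γ) (z−γ)^m e^{−(ν/2)|γ|² + ν z γ̄}`. -/
noncomputable def poincareMonomial (ν : ℝ) (ω₁ ω₂ : ℂ) (χ : ℂ → ℂ) (m : ℕ) (z : ℂ) : ℂ :=
  ∑' γ : ℤ × ℤ,
    χ (latPt ω₁ ω₂ γ) * (z - latPt ω₁ ω₂ γ) ^ m *
      Complex.exp (-(ν : ℂ) / 2 * (‖latPt ω₁ ω₂ γ‖ : ℂ) ^ 2 +
        (ν : ℂ) * z * starRingEnd ℂ (latPt ω₁ ω₂ γ))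

/-!
Expanding each summand of `P_m` by the generating function
`Σ_n H^ν_{m,n}(ξ, ξ̄) zⁿ/n! = νᵐ (ξ - z)ᵐ e^{ν z ξ̄}` gives a double series over `Γ × ℕ`; the
coefficients `a_{m,n}` are its column sums, so the theorem is Fubini once the double series
converges absolutely. Replacing `-1` by `1` and `ξ, ξ̄, z` by `|ξ|, |ξ|, |z|` in the generating
function bounds the row sums of absolute values by `|χ(γ)| e^{-ν|γ|²/2}` times a polynomial in
`|γ|` times `e^{ν|z||γ|}`, hence by a multiple of `e^{-ν|γ|²/2 + r|γ|}`. As `e^{r|γ|}` is at most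
the sum of `e^{±ρ Re γ}` and `e^{±ρ Im γ}` (`ρ = 2|r|`), this is summable because the Poincaré
series of `e₀` converges absolutely at `z = ±ρ/ν` and `z = ±iρ/ν`.
-/

open Finset Nat ComplexConjugate

section GeneratingFunction

variable {K : Type*} [RCLike K]

/-- `hermiteC` with the signs `(-1)^k` replaced by `s^k` and `ξ, ξ̄` by independent `u, v`;
`s = 1`, `u = v = ‖ξ‖` gives the termwise majorant of `H^ν_{m,n}(ξ, ξ̄)`. -/
noncomputable def hermiteSum (ν s u v : K) (m n : ℕ) : K :=
  (m ! : K) * (n ! : K) * ν ^ (m + n) *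
    ∑ k ∈ range (min m n + 1),
      s ^ k * u ^ (m - k) * v ^ (n - k) / (ν ^ k * (k ! : K) * ((m - k)! : K) * ((n - k)! : K))

lemma hasSum_ite_pow_sub_div_factorial (x : K) (k : ℕ) :
    HasSum (fun n => if k ≤ n then x ^ (n - k) / ((n - k)! : K) else 0) (NormedSpace.exp x) := by
  refine (hasSum_nat_add_iff' k).mp ?_
  rw [sum_eq_zero fun i hi => if_neg (by simpa using hi), sub_zero]
  simpa using NormedSpace.expSeries_div_hasSum_exp x

lemma hermiteSum_summand_mul_pow_div_factorial (ν s u v z : K) (hν : ν ≠ 0) {m n k : ℕ}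
    (hkm : k ≤ m) (hkn : k ≤ n) :
    (m ! : K) * n ! * ν ^ (m + n) *
        (s ^ k * u ^ (m - k) * v ^ (n - k) / (ν ^ k * k ! * (m - k)! * (n - k)!)) * z ^ n / n ! =
      m.choose k * ν ^ m * s ^ k * u ^ (m - k) * z ^ k * ((ν * z * v) ^ (n - k) / (n - k)!) := by
  obtain ⟨j, rfl⟩ := Nat.exists_eq_add_of_le hkn
  rw [Nat.cast_choose K hkm, Nat.add_sub_cancel_left]
  have hkj : ((k + j)! : K) ≠ 0 := Nat.cast_ne_zero.2 (factorial_ne_zero _)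
  field_simp
  ring

lemma hasSum_hermiteSum_mul_pow_div_factorial (ν s u v z : K) (hν : ν ≠ 0) (m : ℕ) :
    HasSum (fun n => hermiteSum ν s u v m n * z ^ n / n !)
      (ν ^ m * (u + s * z) ^ m * NormedSpace.exp (ν * z * v)) := by
  set c : ℕ → K := fun k => m.choose k * ν ^ m * s ^ k * u ^ (m - k) * z ^ k
  have hsum : HasSum
      (fun n => ∑ k ∈ range (m + 1),
        c k * if k ≤ n then (ν * z * v) ^ (n - k) / ((n - k)! : K) else 0)
      (∑ k ∈ range (m + 1), c k * NormedSpace.exp (ν * z * v)) :=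
    hasSum_sum fun k _ => (hasSum_ite_pow_sub_div_factorial _ k).mul_left (c k)
  have hbinom : ∑ k ∈ range (m + 1), c k = ν ^ m * (u + s * z) ^ m := by
    rw [add_comm u, add_pow, mul_sum]
    refine sum_congr rfl fun k _ => ?_
    ring
  rw [← sum_mul, hbinom] at hsum
  refine hsum.congr_fun fun n => ?_
  rw [hermiteSum, mul_sum, sum_mul, sum_div]
  refine sum_subset_zero_on_sdiff (range_subset_range.2 (by omega)) ?_ ?_
  · intro k hk
    simp only [mem_sdiff, mem_range] at hk
    rw [if_neg (by omega), mul_zero]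
  · intro k hk
    rw [mem_range] at hk
    rw [if_pos (by omega)]
    exact hermiteSum_summand_mul_pow_div_factorial ν s u v z hν (by omega) (by omega)

end GeneratingFunction

lemma hasSum_hermiteC_mul_pow_div_factorial {ν : ℝ} (hν : ν ≠ 0) (m : ℕ) (ξ z : ℂ) :
    HasSum (fun n => hermiteC ν m n ξ * z ^ n / n !)
      ((ν : ℂ) ^ m * (ξ - z) ^ m * Complex.exp (ν * z * conj ξ)) := by
  have h := hasSum_hermiteSum_mul_pow_div_factorial (ν : ℂ) (-1) ξ (conj ξ) z
    (ofReal_ne_zero.2 hν) m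
  rwa [neg_one_mul, ← sub_eq_add_neg, ← Complex.exp_eq_exp_ℂ] at h

lemma hasSum_hermiteSum_one_mul_pow_div_factorial {ν : ℝ} (hν : ν ≠ 0) (m : ℕ) (a t : ℝ) :
    HasSum (fun n => hermiteSum ν 1 a a m n * t ^ n / n !)
      (ν ^ m * (a + t) ^ m * Real.exp (ν * t * a)) := by
  have h := hasSum_hermiteSum_mul_pow_div_factorial ν 1 a a t hν m
  rwa [one_mul, ← Real.exp_eq_exp_ℝ] at h

lemma norm_hermiteC_le {ν : ℝ} (hν : 0 < ν) (m n : ℕ) (ξ : ℂ) :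
    ‖hermiteC ν m n ξ‖ ≤ hermiteSum ν 1 ‖ξ‖ ‖ξ‖ m n := by
  rw [hermiteC, hermiteSum, norm_mul]
  gcongr
  · simp [abs_of_pos hν]
  · refine (norm_sum_le _ _).trans_eq (sum_congr rfl fun k _ => ?_)
    simp [abs_of_pos hν]

lemma exp_mul_norm_le_sum_exp_re (r : ℝ) (ζ : ℂ) :
    Real.exp (r * ‖ζ‖) ≤
      ∑ j : Fin 4, Real.exp (((![1, -1, I, -I] : Fin 4 → ℂ) j * (2 * |r| : ℝ) * conj ζ).re) := by
  simp only [Fin.sum_univ_four]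
  simp only [Fin.isValue, Matrix.cons_val_zero, ofReal_mul, ofReal_ofNat, one_mul,
    mul_re, re_ofNat, ofReal_re, im_ofNat, ofReal_im, mul_zero, sub_zero, conj_re, mul_im, zero_mul,
    add_zero, conj_im, mul_neg, neg_zero, Matrix.cons_val_one, neg_mul, neg_re, Matrix.cons_val,
    I_re, I_im, sub_self, zero_add, sub_neg_eq_add]
  set R := 2 * |r|
  have hR : 0 ≤ R := by positivity
  have hre := Real.exp_abs_le (R * ζ.re)
  have him := Real.exp_abs_le (R * ζ.im)
  rw [abs_mul, abs_of_nonneg hR] at hre him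
  have hnorm : r * ‖ζ‖ ≤ |r| * (|ζ.re| + |ζ.im|) :=
    (mul_le_mul_of_nonneg_right (le_abs_self r) (norm_nonneg ζ)).trans
      (mul_le_mul_of_nonneg_left (norm_le_abs_re_add_abs_im ζ) (abs_nonneg r))
  have := Real.exp_pos (R * ζ.re)
  have := Real.exp_pos (-(R * ζ.re))
  have := Real.exp_pos (R * ζ.im)
  have := Real.exp_pos (-(R * ζ.im))
  rcases le_total |ζ.re| |ζ.im| with h | h
  · have := Real.exp_le_exp.2 (show r * ‖ζ‖ ≤ R * |ζ.im| by nlinarith [abs_nonneg r])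
    linarith
  · have := Real.exp_le_exp.2 (show r * ‖ζ‖ ≤ R * |ζ.re| by nlinarith [abs_nonneg r])
    linarith

section Majorant

variable {ι : Type*} {c Λ : ι → ℂ}

lemma summable_norm_mul_exp_mul_norm
    (h : ∀ w : ℂ, Summable fun i => c i * Complex.exp (w * conj (Λ i))) (r : ℝ) :
    Summable fun i => ‖c i‖ * Real.exp (r * ‖Λ i‖) := by
  have hdir : ∀ w : ℂ, Summable fun i => ‖c i‖ * Real.exp ((w * conj (Λ i)).re) := fun w =>
    (h w).norm.congr fun i => by rw [norm_mul, Complex.norm_exp]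
  refine Summable.of_nonneg_of_le (fun i => by positivity)
    (fun i => mul_le_mul_of_nonneg_left (exp_mul_norm_le_sum_exp_re r (Λ i)) (norm_nonneg _)) ?_
  simp only [mul_sum]
  exact summable_sum fun j _ => hdir _

lemma summable_norm_mul_pow_mul_exp_mul_norm {ν : ℝ} (hν : 0 ≤ ν)
    (h : ∀ w : ℂ, Summable fun i => c i * Complex.exp (w * conj (Λ i))) (m : ℕ) {t : ℝ}
    (ht : 0 ≤ t) :
    Summable fun i => ‖c i‖ * (ν ^ m * (‖Λ i‖ + t) ^ m * Real.exp (ν * t * ‖Λ i‖)) := by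
  refine Summable.of_nonneg_of_le (fun i => by positivity) (fun i => ?_)
    ((summable_norm_mul_exp_mul_norm h (ν * t + 1)).mul_left (ν ^ m * m ! * Real.exp t))
  have hpow : (‖Λ i‖ + t) ^ m ≤ m ! * Real.exp (‖Λ i‖ + t) := by
    have := Real.pow_div_factorial_le_exp _ (by positivity : 0 ≤ ‖Λ i‖ + t) m
    rwa [div_le_iff₀ (by positivity), mul_comm] at this
  calc ‖c i‖ * (ν ^ m * (‖Λ i‖ + t) ^ m * Real.exp (ν * t * ‖Λ i‖))
      ≤ ‖c i‖ * (ν ^ m * (m ! * Real.exp (‖Λ i‖ + t)) * Real.exp (ν * t * ‖Λ i‖)) := by gcongr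
    _ = ν ^ m * m ! * Real.exp t * (‖c i‖ * Real.exp ((ν * t + 1) * ‖Λ i‖)) := by
      rw [Real.exp_add, add_mul, one_mul, Real.exp_add]
      ring

end Majorant

section Expansion

variable {ι : Type*} {ν : ℝ} {c Λ : ι → ℂ}

lemma summable_hermiteC_family (hν : 0 < ν)
    (h : ∀ w : ℂ, Summable fun i => c i * Complex.exp (w * conj (Λ i))) (m : ℕ) (z : ℂ) :
    Summable fun p : ι × ℕ => c p.1 * (hermiteC ν m p.2 (Λ p.1) * z ^ p.2 / p.2 !) := by
  set B : ι × ℕ → ℝ := fun p =>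
    ‖c p.1‖ * (hermiteSum ν 1 ‖Λ p.1‖ ‖Λ p.1‖ m p.2 * ‖z‖ ^ p.2 / p.2 !)
  have hrow : ∀ i, HasSum (fun n => B (i, n))
      (‖c i‖ * (ν ^ m * (‖Λ i‖ + ‖z‖) ^ m * Real.exp (ν * ‖z‖ * ‖Λ i‖))) := fun i =>
    (hasSum_hermiteSum_one_mul_pow_div_factorial hν.ne' m _ _).mul_left _
  have hB : Summable B := by
    refine (summable_prod_of_nonneg fun p => ?_).2 ⟨fun i => (hrow i).summable, ?_⟩
    · have := (norm_nonneg _).trans (norm_hermiteC_le hν m p.2 (Λ p.1))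
      positivity
    · exact (summable_norm_mul_pow_mul_exp_mul_norm hν.le h m (norm_nonneg z)).congr fun i =>
        (hrow i).tsum_eq.symm
  refine hB.of_norm_bounded fun p => ?_
  rw [norm_mul, norm_div, norm_mul, norm_pow, Complex.norm_natCast]
  simp only [B]
  gcongr
  exact norm_hermiteC_le hν m p.2 (Λ p.1)

theorem hasSum_tsum_mul_hermiteC (hν : 0 < ν)
    (h : ∀ w : ℂ, Summable fun i => c i * Complex.exp (w * conj (Λ i))) (m : ℕ) (z : ℂ) :
    HasSum (fun n => (∑' i, c i * hermiteC ν m n (Λ i)) * z ^ n / n !)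
      ((-ν : ℂ) ^ m * ∑' i, c i * (z - Λ i) ^ m * Complex.exp (ν * z * conj (Λ i))) := by
  set F : ι → ℕ → ℂ := fun i n => c i * (hermiteC ν m n (Λ i) * z ^ n / n !)
  have hF : Summable (Function.uncurry F) := summable_hermiteC_family hν h m z
  have hrow : ∀ i, ∑' n, F i n =
      (-ν : ℂ) ^ m * (c i * (z - Λ i) ^ m * Complex.exp (ν * z * conj (Λ i))) := by
    intro i
    have hsign : (ν : ℂ) ^ m * (Λ i - z) ^ m = (-ν : ℂ) ^ m * (z - Λ i) ^ m := by
      rw [← mul_pow, ← mul_pow]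
      ring
    rw [((hasSum_hermiteC_mul_pow_div_factorial hν.ne' m (Λ i) z).mul_left (c i)).tsum_eq, hsign]
    ring
  have hcol : ∀ n, ∑' i, F i n = (∑' i, c i * hermiteC ν m n (Λ i)) * z ^ n / n ! := by
    intro n
    simp only [F, ← mul_assoc, mul_div_assoc]
    exact tsum_mul_right
  rw [← tsum_mul_left]
  simp only [← hrow, ← hcol]
  rw [← hF.tsum_comm]
  exact hF.prod_symm.prod.hasSum

end Expansion

theorem poincareMonomial_series_expansion_general (ν : ℝ) (hν : 0 < ν) (ω₁ ω₂ : ℂ) (χ : ℂ → ℂ)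
    (hPsum : ∀ (m : ℕ) (z : ℂ), Summable fun γ : ℤ × ℤ =>
      χ (latPt ω₁ ω₂ γ) * (z - latPt ω₁ ω₂ γ) ^ m *
        Complex.exp (-(ν : ℂ) / 2 * (‖latPt ω₁ ω₂ γ‖ : ℂ) ^ 2 +
          (ν : ℂ) * z * starRingEnd ℂ (latPt ω₁ ω₂ γ))) :
    ∀ (m : ℕ) (z : ℂ),
      Summable (fun n : ℕ => aCoeff ν ω₁ ω₂ χ m n * z ^ n / (n.factorial : ℂ)) ∧
      poincareMonomial ν ω₁ ω₂ χ m z =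
        ((-1 : ℂ) ^ m / (ν : ℂ) ^ m) *
          ∑' n : ℕ, aCoeff ν ω₁ ω₂ χ m n * z ^ n / (n.factorial : ℂ) := by
  intro m z
  have hν' : (ν : ℂ) ≠ 0 := ofReal_ne_zero.2 hν.ne'
  have hsum : ∀ w : ℂ, Summable fun γ =>
      χ (latPt ω₁ ω₂ γ) * Complex.exp (-(ν : ℂ) / 2 * (‖latPt ω₁ ω₂ γ‖ : ℂ) ^ 2) *
        Complex.exp (w * conj (latPt ω₁ ω₂ γ)) := fun w =>
    (hPsum 0 (w / ν)).congr fun γ => by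
      rw [pow_zero, mul_one, mul_div_cancel₀ _ hν', Complex.exp_add, mul_assoc]
  have hexp : HasSum (fun n => aCoeff ν ω₁ ω₂ χ m n * z ^ n / n !) _ :=
    hasSum_tsum_mul_hermiteC hν hsum m z
  have hunit : (-1 : ℂ) ^ m / (ν : ℂ) ^ m * (-ν : ℂ) ^ m = 1 := by
    rw [div_mul_eq_mul_div, div_eq_one_iff_eq (pow_ne_zero m hν'), ← mul_pow, neg_one_mul,
      neg_neg]
  refine ⟨hexp.summable, ?_⟩
  rw [hexp.tsum_eq, ← mul_assoc, hunit, one_mul, poincareMonomial]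
  refine tsum_congr fun γ => ?_
  rw [Complex.exp_add]
  ring

theorem poincareMonomial_series_expansion (ν : ℝ) (hν : 0 < ν) (ω₁ ω₂ : ℂ)
    (hrank : (ω₁ * starRingEnd ℂ ω₂).im ≠ 0) (χ : ℂ → ℂ)
    (hχuni : ∀ p : ℤ × ℤ, ‖χ (latPt ω₁ ω₂ p)‖ = 1)
    (hχpseudo : ∀ p q : ℤ × ℤ,
      χ (latPt ω₁ ω₂ p + latPt ω₁ ω₂ q) =
        χ (latPt ω₁ ω₂ p) * χ (latPt ω₁ ω₂ q) *
          Complex.exp (((ν : ℂ) / 2) *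
            (latPt ω₁ ω₂ p * starRingEnd ℂ (latPt ω₁ ω₂ q) -
              starRingEnd ℂ (latPt ω₁ ω₂ p) * latPt ω₁ ω₂ q)))
    (hPsum : ∀ (m : ℕ) (z : ℂ), Summable fun γ : ℤ × ℤ =>
      χ (latPt ω₁ ω₂ γ) * (z - latPt ω₁ ω₂ γ) ^ m *
        Complex.exp (-(ν : ℂ) / 2 * (‖latPt ω₁ ω₂ γ‖ : ℂ) ^ 2 +
          (ν : ℂ) * z * starRingEnd ℂ (latPt ω₁ ω₂ γ)))
    (hasum : ∀ m n : ℕ, Summable fun γ : ℤ × ℤ =>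
      χ (latPt ω₁ ω₂ γ) * Complex.exp (-(ν : ℂ) / 2 * (‖latPt ω₁ ω₂ γ‖ : ℂ) ^ 2) *
        hermiteC ν m n (latPt ω₁ ω₂ γ)) :
    ∀ (m : ℕ) (z : ℂ),
      Summable (fun n : ℕ => aCoeff ν ω₁ ω₂ χ m n * z ^ n / (n.factorial : ℂ)) ∧
      poincareMonomial ν ω₁ ω₂ χ m z =
        ((-1 : ℂ) ^ m / (ν : ℂ) ^ m) *
          ∑' n : ℕ, aCoeff ν ω₁ ω₂ χ m n * z ^ n / (n.factorial : ℂ) :=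
  poincareMonomial_series_expansion_general ν hν ω₁ ω₂ χ hPsum
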